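/- arXiv:0704.1916 — 4 statements merged into one kernel-verified Lean document; each statement's English description precedes it below -/
import Mathlib

section
/- Let β > 0, γ > 0, δ > 0 be real and a ∈ ℝ. Then for all sufficiently large real s (in particular s > max((2|a|)^{1/β}, 0)), the Laplace transform of t ↦ t^{γ-1} E^δ_{β,γ}(a t^β) equals s^{-γ} (1 - a s^{-β})^{-δ}, i.e. ∫₀^∞ e^{-st} t^{γ-1} E^δ_{β,γ}(a t^β) dt = s^{-γ}(1 - a s^{-β})^{-δ}. -/
/-!
Expand the Prabhakar function in its defining series and integrate term by term with
`∫₀^∞ t^(A-1) e^(-st) dt = Γ(A) s^(-A)`: the factor `Γ(βτ + γ)` cancels, leaving `s^(-γ)` times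
the binomial series `∑ (δ)_τ x^τ / τ! = (1 - x)^(-δ)` at `x = a s^(-β)`, where `|x| < 1` for large
`s`. Term-by-term integration is legitimate because the integrals of the absolute values of the
terms are the absolute values of the terms of that (absolutely convergent) series.
-/

open MeasureTheory Real

/-- Prabhakar generalized Mittag-Leffler function (real argument). -/
noncomputable def prabhakar (β γ δ : ℝ) (z : ℝ) : ℝ :=
  ∑' τ : ℕ, (ascPochhammer ℝ τ).eval δ * z ^ τ /
    (Real.Gamma (β * τ + γ) * (τ.factorial : ℝ))

open Set Nat

theorem Ring.choose_add_sub_one_eq_ascPochhammer_eval_div_factorial (a : ℝ) (n : ℕ) :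
    Ring.choose (a + n - 1) n = (ascPochhammer ℝ n).eval a / n ! := by
  rw [← Ring.multichoose_eq, eq_div_iff (by positivity), mul_comm, ← nsmul_eq_mul,
    Ring.factorial_nsmul_multichoose_eq_ascPochhammer, Polynomial.ascPochhammer_smeval_eq_eval]

theorem hasSum_ascPochhammer_eval_mul_pow_div_factorial (δ : ℝ) {x : ℝ} (hx : |x| < 1) :
    HasSum (fun n : ℕ => (ascPochhammer ℝ n).eval δ * x ^ n / n !) ((1 - x) ^ (-δ)) := by
  have h := (one_div_one_sub_rpow_hasFPowerSeriesOnBall_zero δ).hasSum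
    (y := x) (by simpa [enorm_eq_nnnorm, ← NNReal.coe_lt_one] using hx)
  rw [zero_add, one_div, ← rpow_neg (by linarith [(abs_lt.1 hx).2])] at h
  refine h.congr_fun fun n => ?_
  rw [FormalMultilinearSeries.ofScalars_apply_eq,
    Ring.choose_add_sub_one_eq_ascPochhammer_eval_div_factorial, smul_eq_mul]
  ring

theorem integrableOn_rpow_sub_one_mul_exp_neg_mul {a r : ℝ} (ha : 0 < a) (hr : 0 < r) :
    IntegrableOn (fun t : ℝ => t ^ (a - 1) * exp (-(r * t))) (Ioi 0) := by
  simpa only [rpow_one, neg_mul] using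
    integrableOn_rpow_mul_exp_neg_mul_rpow (by linarith) one_pos hr (s := a - 1)

theorem integral_tsum_mul_rpow_sub_one_mul_exp_neg_mul {c A : ℕ → ℝ} {s : ℝ}
    (hA : ∀ n, 0 < A n) (hs : 0 < s)
    (hsum : Summable fun n => c n * ((1 / s) ^ A n * Gamma (A n))) :
    ∫ t in Ioi 0, ∑' n, c n * (t ^ (A n - 1) * exp (-(s * t))) =
      ∑' n, c n * ((1 / s) ^ A n * Gamma (A n)) := by
  have hint : ∀ n, Integrable (fun t => c n * (t ^ (A n - 1) * exp (-(s * t))))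
      (volume.restrict (Ioi 0)) := fun n =>
    (integrableOn_rpow_sub_one_mul_exp_neg_mul (hA n) hs).const_mul (c n)
  have hnorm : ∀ n, ∫ t in Ioi 0, ‖c n * (t ^ (A n - 1) * exp (-(s * t)))‖ =
      |c n * ((1 / s) ^ A n * Gamma (A n))| := by
    intro n
    have hΓ : 0 ≤ (1 / s) ^ A n * Gamma (A n) := by have := hA n; positivity
    rw [abs_mul, abs_of_nonneg hΓ, ← integral_rpow_mul_exp_neg_mul_Ioi (hA n) hs,
      ← integral_const_mul]
    refine setIntegral_congr_fun measurableSet_Ioi fun t (ht : 0 < t) => ?_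
    rw [norm_mul, Real.norm_eq_abs, Real.norm_of_nonneg (by positivity)]
  rw [← integral_tsum_of_summable_integral_norm hint (by simpa only [hnorm] using hsum.abs)]
  refine tsum_congr fun n => ?_
  rw [integral_const_mul, integral_rpow_mul_exp_neg_mul_Ioi (hA n) hs]

theorem exp_mul_rpow_mul_prabhakar_eq_tsum (β γ δ a s : ℝ) {t : ℝ} (ht : 0 < t) :
    exp (-s * t) * (t ^ (γ - 1) * prabhakar β γ δ (a * t ^ β)) =
      ∑' τ : ℕ, (ascPochhammer ℝ τ).eval δ * a ^ τ / (Gamma (β * τ + γ) * τ !) *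
        (t ^ (β * τ + γ - 1) * exp (-(s * t))) := by
  rw [prabhakar, ← tsum_mul_left, ← tsum_mul_left]
  refine tsum_congr fun τ => ?_
  have ht_pow : t ^ (β * τ + γ - 1) = t ^ (γ - 1) * (t ^ β) ^ τ := by
    rw [← rpow_natCast, ← rpow_mul ht.le, ← rpow_add ht]
    ring_nf
  rw [ht_pow, mul_pow, neg_mul]
  ring

theorem abs_mul_rpow_neg_lt_one {β a s : ℝ} (hβ : 0 < β) (hs : 0 < s) (h : |a| ^ (1 / β) < s) :
    |a * s ^ (-β)| < 1 := by
  have ha : |a| < s ^ β := by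
    simpa only [← rpow_mul (abs_nonneg a), one_div_mul_cancel hβ.ne', rpow_one] using
      rpow_lt_rpow (by positivity) h hβ
  have hsβ : 0 < s ^ β := rpow_pos_of_pos hs β
  rwa [abs_mul, rpow_neg hs.le, abs_inv, abs_of_pos hsβ, ← div_eq_mul_inv, div_lt_one hsβ]

theorem laplace_prabhakar_general (β γ δ : ℝ) (hβ : 0 < β) (hγ : 0 < γ) (a : ℝ)
    (s : ℝ) (hs : max ((2 * |a|) ^ (1 / β)) 0 < s) :
    (∫ t in Set.Ioi (0:ℝ), Real.exp (-s * t) * (t ^ (γ - 1) * prabhakar β γ δ (a * t ^ β)))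
      = s ^ (-γ) * (1 - a * s ^ (-β)) ^ (-δ) := by
  have hs0 : 0 < s := (le_max_right _ _).trans_lt hs
  have hA : ∀ τ : ℕ, 0 < β * τ + γ := fun τ => by positivity
  have hx : |a * s ^ (-β)| < 1 := by
    refine abs_mul_rpow_neg_lt_one hβ hs0 (lt_of_le_of_lt ?_ ((le_max_left _ _).trans_lt hs))
    exact rpow_le_rpow (abs_nonneg a) (by linarith [abs_nonneg a]) (by positivity)
  have hterm : ∀ τ : ℕ, (ascPochhammer ℝ τ).eval δ * a ^ τ / (Gamma (β * τ + γ) * τ !) *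
      ((1 / s) ^ (β * τ + γ) * Gamma (β * τ + γ)) =
      s ^ (-γ) * ((ascPochhammer ℝ τ).eval δ * (a * s ^ (-β)) ^ τ / τ !) := by
    intro τ
    have hΓ : Gamma (β * τ + γ) ≠ 0 := (Gamma_pos_of_pos (hA τ)).ne'
    rw [one_div, inv_rpow hs0.le, ← rpow_neg hs0.le, neg_add, rpow_add hs0, mul_pow,
      ← rpow_natCast, ← rpow_natCast, ← rpow_mul hs0.le]
    field_simp
  have hbinom := (hasSum_ascPochhammer_eval_mul_pow_div_factorial δ hx).mul_left (s ^ (-γ))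
  rw [setIntegral_congr_fun measurableSet_Ioi fun t ht =>
      exp_mul_rpow_mul_prabhakar_eq_tsum β γ δ a s ht,
    integral_tsum_mul_rpow_sub_one_mul_exp_neg_mul hA hs0
      (by simpa only [hterm] using hbinom.summable),
    tsum_congr hterm, hbinom.tsum_eq]

theorem laplace_prabhakar (β γ δ : ℝ) (hβ : 0 < β) (hγ : 0 < γ) (hδ : 0 < δ) (a : ℝ)
    (s : ℝ) (hs : max ((2 * |a|) ^ (1 / β)) 0 < s) :
    (∫ t in Set.Ioi (0:ℝ), Real.exp (-s * t) * (t ^ (γ - 1) * prabhakar β γ δ (a * t ^ β)))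
      = s ^ (-γ) * (1 - a * s ^ (-β)) ^ (-δ) :=
  laplace_prabhakar_general β γ δ hβ hγ a s hs
end

section
/- Let ρ > 0, ν > 0, c > 0, n a positive integer, and N₀ ∈ ℝ. Then N(t) = N₀ Γ(ρ) t^{ρ-1} E^n_{ν,ρ}(-(ct)^ν) satisfies N(t) - N₀ t^{ρ-1} = -∑_{r=1}^n C(n,r) c^{rν} (₀D_t^{-rν} N)(t) for all t > 0. -/
open MeasureTheory Real

/-- Riemann–Liouville fractional integral of order ν. -/
noncomputable def rlInt (ν : ℝ) (f : ℝ → ℝ) (t : ℝ) : ℝ :=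
  (1 / Real.Gamma ν) * ∫ u in (0:ℝ)..t, (t - u) ^ (ν - 1) * f u

/-!
Since `(n)_k (-1)^k / k! = C(-n, k)`, for `t > 0` the function `N` is the fractional power series
`N₀ Γ(ρ) ∑_k C(-n, k) c^{νk} t^{νk+ρ-1} / Γ(νk+ρ)`. The Riemann–Liouville integral of order `μ`
sends `t^{β-1} / Γ(β)` to `t^{β+μ-1} / Γ(β+μ)` (a Beta integral), and it may be applied termwise
because `1 / Γ(νk+γ)` decays faster than any geometric sequence. So `c^{rν} D^{-rν} N` is the same
series with its coefficients shifted by `r`, and in `∑_{r=0}^n C(n,r) c^{rν} D^{-rν} N` the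
coefficient of the `m`-th power is `∑_r C(n,r) C(-n, m-r) = C(0, m)` by Chu–Vandermonde: only the
term `m = 0`, which is `N₀ t^{ρ-1}`, survives.
-/

open Set Filter

lemma intervalIntegrable_sub_rpow_mul_rpow {α β t : ℝ} (hα : 0 < α) (hβ : 0 < β) (ht : 0 < t) :
    IntervalIntegrable (fun u => (t - u) ^ (β - 1) * u ^ (α - 1)) volume 0 t := by
  have hleft : IntervalIntegrable (fun u => u ^ (α - 1)) volume 0 t :=
    intervalIntegral.intervalIntegrable_rpow' (by linarith)
  have hright : IntervalIntegrable (fun u => (t - u) ^ (β - 1)) volume 0 t := by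
    have := (intervalIntegral.intervalIntegrable_rpow' (r := β - 1) (by linarith)
      (a := 0) (b := t)).comp_sub_left t
    simpa using this.symm
  have hmid : t / 2 ∈ uIcc 0 t := by rw [uIcc_of_le ht.le]; constructor <;> linarith
  refine IntervalIntegrable.trans (b := t / 2) ?_ ?_
  · refine (hleft.mono_set (uIcc_subset_uIcc_left hmid)).continuousOn_mul ?_
    refine ContinuousOn.rpow_const (by fun_prop) fun u hu => Or.inl ?_
    rw [uIcc_of_le (by linarith)] at hu
    linarith [hu.2]
  · refine (hright.mono_set (uIcc_subset_uIcc_right hmid)).mul_continuousOn ?_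
    refine ContinuousOn.rpow_const (by fun_prop) fun u hu => Or.inl ?_
    rw [uIcc_of_le (by linarith)] at hu
    linarith [hu.1]

lemma integral_sub_rpow_mul_rpow {α β t : ℝ} (hα : 0 < α) (hβ : 0 < β) (ht : 0 < t) :
    ∫ u in (0 : ℝ)..t, (t - u) ^ (β - 1) * u ^ (α - 1)
      = Gamma α * Gamma β / Gamma (α + β) * t ^ (α + β - 1) := by
  have hscaled := Complex.betaIntegral_scaled α β ht
  rw [Complex.betaIntegral_eq_Gamma_mul_div _ _ (by simpa) (by simpa), ← Complex.ofReal_add,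
    Complex.Gamma_ofReal, Complex.Gamma_ofReal, Complex.Gamma_ofReal] at hscaled
  have hcast : ∀ {x y : ℝ}, 0 ≤ x → ((x ^ (y - 1) : ℝ) : ℂ) = (x : ℂ) ^ ((y : ℂ) - 1) := by
    intro x y hx
    rw [Complex.ofReal_cpow hx]
    push_cast
    rfl
  apply Complex.ofReal_injective
  rw [← intervalIntegral.integral_ofReal]
  have hcongr : ∫ u in (0 : ℝ)..t, (((t - u) ^ (β - 1) * u ^ (α - 1) : ℝ) : ℂ) =
      ∫ u in (0 : ℝ)..t, (u : ℂ) ^ ((α : ℂ) - 1) * ((t : ℂ) - u) ^ ((β : ℂ) - 1) := by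
    refine intervalIntegral.integral_congr fun u hu => ?_
    rw [uIcc_of_le ht.le] at hu
    simp only [Complex.ofReal_mul]
    rw [hcast hu.1, hcast (sub_nonneg.2 hu.2), mul_comm]
    push_cast
    rfl
  rw [hcongr, hscaled, ← hcast ht.le]
  push_cast
  ring

lemma rlInt_congr {μ t : ℝ} (ht : 0 ≤ t) {f g : ℝ → ℝ} (hfg : ∀ u, 0 < u → f u = g u) :
    rlInt μ f t = rlInt μ g t := by
  rw [rlInt, rlInt, intervalIntegral.integral_of_le ht, intervalIntegral.integral_of_le ht,
    setIntegral_congr_fun measurableSet_Ioc fun u hu => by rw [hfg u hu.1]]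

lemma rlInt_const_mul_rpow {β μ t : ℝ} (hβ : 0 < β) (hμ : 0 < μ) (ht : 0 < t) (C : ℝ) :
    rlInt μ (fun u => C * u ^ (β - 1)) t = C * Gamma β / Gamma (β + μ) * t ^ (β + μ - 1) := by
  simp_rw [rlInt, mul_left_comm _ C, intervalIntegral.integral_const_mul,
    integral_sub_rpow_mul_rpow hβ hμ ht]
  have := (Gamma_pos_of_pos hμ).ne'
  field_simp

lemma rlInt_tsum {μ t : ℝ} (ht : 0 ≤ t) {f : ℕ → ℝ → ℝ}
    (hf : ∀ k, IntervalIntegrable (fun u => (t - u) ^ (μ - 1) * f k u) volume 0 t)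
    (hs : Summable fun k => ∫ u in (0 : ℝ)..t, ‖(t - u) ^ (μ - 1) * f k u‖) :
    rlInt μ (fun u => ∑' k, f k u) t = ∑' k, rlInt μ (f k) t := by
  simp_rw [rlInt, tsum_mul_left, ← tsum_mul_left (a := (t - _) ^ (μ - 1)),
    intervalIntegral.integral_of_le ht] at hs ⊢
  rw [integral_tsum_of_summable_integral_norm (fun k => (hf k).1) hs]

lemma rpow_mul_natCast_add {t : ℝ} (ht : 0 < t) (ν β : ℝ) (k : ℕ) :
    t ^ (ν * k + β) = (t ^ ν) ^ k * t ^ β := by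
  rw [rpow_add ht, rpow_mul_natCast ht.le]

lemma rpow_mul_exp_neg_le_Gamma {A s : ℝ} (hA : 0 < A) (hs : 1 ≤ s) :
    A ^ (s - 1) * exp (-A) ≤ Gamma s := by
  have hGamma := GammaIntegral_convergent (by linarith : 0 < s)
  calc A ^ (s - 1) * exp (-A) = ∫ x in Ioi A, A ^ (s - 1) * exp (-x) := by
        rw [integral_const_mul, integral_exp_neg_Ioi]
    _ ≤ ∫ x in Ioi A, exp (-x) * x ^ (s - 1) := by
        refine setIntegral_mono_on ((integrableOn_exp_neg_Ioi A).const_mul _)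
          (hGamma.mono_set (Ioi_subset_Ioi hA.le)) measurableSet_Ioi fun x hx => ?_
        rw [mul_comm]
        gcongr
        exact hx.le
    _ ≤ ∫ x in Ioi 0, exp (-x) * x ^ (s - 1) :=
        setIntegral_mono_set hGamma
          (ae_restrict_of_forall_mem measurableSet_Ioi
            fun x hx => mul_nonneg (exp_pos _).le (rpow_nonneg (le_of_lt hx) _))
          (Ioi_subset_Ioi hA.le).eventuallyLE
    _ = Gamma s := (Gamma_eq_integral (by linarith)).symm

lemma summable_pow_div_Gamma {ν : ℝ} (hν : 0 < ν) (γ R : ℝ) :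
    Summable fun k : ℕ => R ^ k / Gamma (ν * k + γ) := by
  set A : ℝ := max 1 ((|R| + 1) ^ ν⁻¹)
  have hA : 0 < A := lt_max_of_lt_left one_pos
  have hAν : |R| + 1 ≤ A ^ ν := by
    calc |R| + 1 = ((|R| + 1) ^ ν⁻¹) ^ ν := by
          rw [← rpow_mul (by positivity), inv_mul_cancel₀ hν.ne', rpow_one]
      _ ≤ A ^ ν := by gcongr; exact le_max_right _ _
  set q := |R| / A ^ ν
  have hq : q < 1 := (div_lt_one (by positivity)).2 (by linarith)
  refine .of_norm_bounded_eventually_nat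
    ((summable_geometric_of_lt_one (by positivity) hq).mul_left (exp A * A ^ (1 - γ))) ?_
  have hlarge : ∀ᶠ k : ℕ in atTop, 1 ≤ ν * k + γ :=
    (tendsto_natCast_atTop_atTop.const_mul_atTop hν |>.atTop_add
      tendsto_const_nhds).eventually_ge_atTop 1
  filter_upwards [hlarge] with k hk
  have hΓpos : 0 < Gamma (ν * k + γ) := Gamma_pos_of_pos (by linarith)
  simp only [norm_div, norm_pow, Real.norm_eq_abs]
  rw [abs_of_pos hΓpos, div_le_iff₀ hΓpos]
  calc |R| ^ k = exp A * A ^ (1 - γ) * q ^ k * (A ^ (ν * k + γ - 1) * exp (-A)) := by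
        rw [add_sub_assoc, rpow_mul_natCast_add hA, div_pow, rpow_sub hA, rpow_sub hA, rpow_one,
          exp_neg]
        field_simp
    _ ≤ exp A * A ^ (1 - γ) * q ^ k * Gamma (ν * k + γ) := by
        gcongr
        exact rpow_mul_exp_neg_le_Gamma hA hk

noncomputable def fracPowerSeries (a : ℕ → ℝ) (ν ρ t : ℝ) : ℝ :=
  ∑' k : ℕ, a k / Gamma (ν * k + ρ) * t ^ (ν * k + ρ - 1)

lemma summable_fracPowerSeries {a : ℕ → ℝ} {C R ν γ t : ℝ} (hν : 0 < ν) (hγ : 0 < γ)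
    (ht : 0 < t) (ha : ∀ k, |a k| ≤ C * R ^ k) :
    Summable fun k : ℕ => a k / Gamma (ν * k + γ) * t ^ (ν * k + γ - 1) := by
  refine .of_norm_bounded ((summable_pow_div_Gamma hν γ (R * t ^ ν)).mul_left (C * t ^ (γ - 1)))
    fun k => ?_
  have hΓ : 0 < Gamma (ν * k + γ) := Gamma_pos_of_pos (by positivity)
  rw [add_sub_assoc, rpow_mul_natCast_add ht, norm_mul, norm_div, Real.norm_eq_abs,
    Real.norm_of_nonneg hΓ.le, Real.norm_of_nonneg (by positivity), mul_pow]
  calc |a k| / Gamma (ν * k + γ) * ((t ^ ν) ^ k * t ^ (γ - 1))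
      ≤ C * R ^ k / Gamma (ν * k + γ) * ((t ^ ν) ^ k * t ^ (γ - 1)) := by gcongr; exact ha k
    _ = C * t ^ (γ - 1) * (R ^ k * (t ^ ν) ^ k / Gamma (ν * k + γ)) := by ring

lemma rlInt_fracPowerSeries {a : ℕ → ℝ} {ν ρ μ t : ℝ} (hν : 0 ≤ ν) (hρ : 0 < ρ) (hμ : 0 < μ)
    (ht : 0 < t)
    (ha : Summable fun k : ℕ => |a k| / Gamma (ν * k + (ρ + μ)) * t ^ (ν * k + (ρ + μ) - 1)) :
    rlInt μ (fracPowerSeries a ν ρ) t = fracPowerSeries a ν (ρ + μ) t := by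
  have hβ : ∀ k : ℕ, 0 < ν * k + ρ := fun k => by positivity
  have hΓ : ∀ k : ℕ, 0 < Gamma (ν * k + ρ) := fun k => Gamma_pos_of_pos (hβ k)
  have hterm : ∀ (k : ℕ) (C : ℝ), rlInt μ (fun u => C / Gamma (ν * k + ρ) * u ^ (ν * k + ρ - 1)) t
      = C / Gamma (ν * k + (ρ + μ)) * t ^ (ν * k + (ρ + μ) - 1) := by
    intro k C
    rw [rlInt_const_mul_rpow (hβ k) hμ ht, ← add_assoc]
    field_simp [(hΓ k).ne']
  have hnorm : ∀ k : ℕ, ∫ u in (0 : ℝ)..t,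
      ‖(t - u) ^ (μ - 1) * (a k / Gamma (ν * k + ρ) * u ^ (ν * k + ρ - 1))‖
      = Gamma μ * (|a k| / Gamma (ν * k + (ρ + μ)) * t ^ (ν * k + (ρ + μ) - 1)) := by
    intro k
    rw [← hterm, rlInt, one_div, ← mul_assoc, mul_inv_cancel₀ (Gamma_pos_of_pos hμ).ne', one_mul]
    refine intervalIntegral.integral_congr fun u hu => ?_
    rw [uIcc_of_le ht.le] at hu
    simp only [norm_mul, norm_div, Real.norm_eq_abs, abs_of_pos (hΓ k),
      abs_of_nonneg (rpow_nonneg hu.1 _), abs_of_nonneg (rpow_nonneg (sub_nonneg.2 hu.2) _)]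
  unfold fracPowerSeries
  rw [rlInt_tsum ht.le]
  · exact tsum_congr fun k => hterm k (a k)
  · intro k
    convert (intervalIntegrable_sub_rpow_mul_rpow (hβ k) hμ ht).const_mul
      (a k / Gamma (ν * k + ρ)) using 2
    ring
  · simpa only [hnorm] using ha.mul_left (Gamma μ)

lemma fracPowerSeries_sum {ι : Type*} (s : Finset ι) (w : ι → ℝ) (a : ι → ℕ → ℝ) {ν ρ t : ℝ}
    (ha : ∀ i ∈ s, Summable fun k : ℕ => a i k / Gamma (ν * k + ρ) * t ^ (ν * k + ρ - 1)) :
    ∑ i ∈ s, w i * fracPowerSeries (a i) ν ρ t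
      = fracPowerSeries (fun k => ∑ i ∈ s, w i * a i k) ν ρ t := by
  simp_rw [fracPowerSeries, ← tsum_mul_left]
  rw [← Summable.tsum_finsetSum fun i hi => (ha i hi).mul_left (w i)]
  refine tsum_congr fun k => ?_
  rw [Finset.sum_div, Finset.sum_mul]
  exact Finset.sum_congr rfl fun i _ => by ring

lemma fracPowerSeries_ite_zero (K ν ρ t : ℝ) :
    fracPowerSeries (fun m => if m = 0 then K else 0) ν ρ t = K / Gamma ρ * t ^ (ρ - 1) := by
  rw [fracPowerSeries, tsum_eq_single 0 fun m hm => by simp [hm]]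
  simp

def shiftCoeff (r : ℕ) (a : ℕ → ℝ) (m : ℕ) : ℝ := if r ≤ m then a (m - r) else 0

@[simp]
lemma shiftCoeff_zero (a : ℕ → ℝ) : shiftCoeff 0 a = a := by
  ext m; simp [shiftCoeff]

lemma shiftCoeff_const_mul (r : ℕ) (C : ℝ) (a : ℕ → ℝ) (m : ℕ) :
    shiftCoeff r (fun k => C * a k) m = C * shiftCoeff r a m := by
  unfold shiftCoeff; split_ifs <;> simp

lemma fracPowerSeries_shiftCoeff (r : ℕ) (a : ℕ → ℝ) (ν ρ t : ℝ) :
    fracPowerSeries (shiftCoeff r a) ν ρ t = fracPowerSeries a ν (ρ + r * ν) t := by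
  unfold fracPowerSeries
  rw [← (add_left_injective r).tsum_eq]
  · refine tsum_congr fun k => ?_
    simp only [shiftCoeff, le_add_iff_nonneg_left, zero_le, if_true, Nat.add_sub_cancel]
    push_cast
    ring_nf
  · intro m hm
    by_cases h : r ≤ m
    · exact ⟨m - r, Nat.sub_add_cancel h⟩
    · simp [shiftCoeff, h] at hm

lemma rpow_mul_fracPowerSeries_shift {c : ℝ} (hc : 0 < c) (r : ℕ) (a : ℕ → ℝ) (ν ρ t : ℝ) :
    c ^ (r * ν) * fracPowerSeries (fun k => a k * c ^ (ν * k)) ν (ρ + r * ν) t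
      = fracPowerSeries (fun m => shiftCoeff r a m * c ^ (ν * m)) ν ρ t := by
  rw [← fracPowerSeries_shiftCoeff, fracPowerSeries, ← tsum_mul_left]
  refine tsum_congr fun m => ?_
  by_cases h : r ≤ m
  · simp only [shiftCoeff, if_pos h]
    rw [Nat.cast_sub h, mul_sub, rpow_sub hc]
    field_simp
  · simp [shiftCoeff, h]

lemma choose_neg_natCast (n k : ℕ) :
    Ring.choose (-(n : ℝ)) k = (-1) ^ k * Ring.multichoose (n : ℝ) k := by
  rw [Ring.choose_neg', Units.smul_def, zsmul_eq_mul, Int.cast_negOnePow_natCast]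

lemma abs_choose_neg_natCast_le (n k : ℕ) : |Ring.choose (-(n : ℝ)) k| ≤ 2 ^ (n + k) := by
  rw [choose_neg_natCast, abs_mul, abs_pow, abs_neg, abs_one, one_pow, one_mul,
    ← map_natCast (Int.castRingHom ℝ), ← Ring.map_multichoose]
  change |(((n + k - 1).choose k : ℤ) : ℝ)| ≤ 2 ^ (n + k)
  push_cast
  rw [abs_of_nonneg (Nat.cast_nonneg _)]
  exact_mod_cast (Nat.choose_le_two_pow _ _).trans (Nat.pow_le_pow_right two_pos (by omega))

lemma abs_shiftCoeff_choose_neg_mul_rpow_le {c : ℝ} (hc : 0 < c) (K ν : ℝ) (n r m : ℕ) :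
    |shiftCoeff r (fun k => K * Ring.choose (-(n : ℝ)) k) m * c ^ (ν * m)|
      ≤ |K| * 2 ^ n * (2 * c ^ ν) ^ m := by
  have hshift : |shiftCoeff r (Ring.choose (-(n : ℝ))) m| ≤ 2 ^ n * 2 ^ m := by
    unfold shiftCoeff
    split_ifs with h
    · rw [← pow_add]
      exact (abs_choose_neg_natCast_le n (m - r)).trans (pow_le_pow_right₀ one_le_two (by omega))
    · simp only [abs_zero]
      positivity
  calc |shiftCoeff r (fun k => K * Ring.choose (-(n : ℝ)) k) m * c ^ (ν * m)|
      = |K| * |shiftCoeff r (Ring.choose (-(n : ℝ))) m| * (c ^ ν) ^ m := by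
        rw [shiftCoeff_const_mul, abs_mul, abs_mul, abs_of_pos (rpow_pos_of_pos hc _),
          rpow_mul_natCast hc.le]
    _ ≤ |K| * (2 ^ n * 2 ^ m) * (c ^ ν) ^ m := by gcongr
    _ = |K| * 2 ^ n * (2 * c ^ ν) ^ m := by ring

lemma sum_choose_mul_shiftCoeff_choose_neg (n m : ℕ) :
    ∑ r ∈ Finset.range (n + 1), (n.choose r : ℝ) * shiftCoeff r (Ring.choose (-(n : ℝ))) m
      = if m = 0 then 1 else 0 := by
  have hvandermonde := Ring.add_choose_eq m (Commute.all (n : ℝ) (-(n : ℝ)))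
  rw [add_neg_cancel, Ring.choose_zero_ite, Finset.Nat.sum_antidiagonal_eq_sum_range_succ
    (fun i j => Ring.choose (n : ℝ) i * Ring.choose (-(n : ℝ)) j)] at hvandermonde
  rw [hvandermonde]
  calc ∑ r ∈ Finset.range (n + 1), (n.choose r : ℝ) * shiftCoeff r (Ring.choose (-(n : ℝ))) m
      = ∑ r ∈ Finset.range (n + m + 1),
          (n.choose r : ℝ) * shiftCoeff r (Ring.choose (-(n : ℝ))) m := by
        refine Finset.sum_subset (Finset.range_subset_range.2 (by omega)) fun r hr hr' => ?_
        simp only [Finset.mem_range] at hr hr'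
        simp [Nat.choose_eq_zero_of_lt (by omega : n < r)]
    _ = ∑ r ∈ Finset.range (m + 1),
          (n.choose r : ℝ) * shiftCoeff r (Ring.choose (-(n : ℝ))) m := by
        refine (Finset.sum_subset (Finset.range_subset_range.2 (by omega)) fun r hr hr' => ?_).symm
        simp only [Finset.mem_range] at hr hr'
        simp [shiftCoeff, show ¬r ≤ m by omega]
    _ = _ := Finset.sum_congr rfl fun r hr => by
        simp only [Finset.mem_range] at hr
        simp [shiftCoeff, Ring.choose_natCast, show r ≤ m by omega]

lemma sum_choose_mul_shiftCoeff_choose_neg_mul_rpow (K c ν : ℝ) (n m : ℕ) :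
    ∑ r ∈ Finset.range (n + 1),
        (n.choose r : ℝ) * (shiftCoeff r (fun k => K * Ring.choose (-(n : ℝ)) k) m * c ^ (ν * m))
      = if m = 0 then K else 0 := by
  calc ∑ r ∈ Finset.range (n + 1),
        (n.choose r : ℝ) * (shiftCoeff r (fun k => K * Ring.choose (-(n : ℝ)) k) m * c ^ (ν * m))
      = K * c ^ (ν * m) *
          ∑ r ∈ Finset.range (n + 1), (n.choose r : ℝ) * shiftCoeff r (Ring.choose (-(n : ℝ))) m := by
        rw [Finset.mul_sum]
        exact Finset.sum_congr rfl fun r _ => by rw [shiftCoeff_const_mul]; ring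
    _ = _ := by
        rw [sum_choose_mul_shiftCoeff_choose_neg]
        split_ifs with h <;> simp [h]

lemma prabhakar_natCast_neg (ν ρ x : ℝ) (n : ℕ) :
    prabhakar ν ρ n (-x) = ∑' k : ℕ, Ring.choose (-(n : ℝ)) k * x ^ k / Gamma (ν * k + ρ) := by
  refine tsum_congr fun k => ?_
  rw [choose_neg_natCast, ← Polynomial.ascPochhammer_smeval_eq_eval,
    ← Ring.factorial_nsmul_multichoose_eq_ascPochhammer, nsmul_eq_mul, neg_pow]
  field_simp

lemma mul_rpow_mul_prabhakar_eq_fracPowerSeries (K ν ρ : ℝ) (n : ℕ) {c u : ℝ} (hc : 0 ≤ c)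
    (hu : 0 < u) :
    K * u ^ (ρ - 1) * prabhakar ν ρ n (-(c * u) ^ ν)
      = fracPowerSeries (fun k => K * Ring.choose (-(n : ℝ)) k * c ^ (ν * k)) ν ρ u := by
  rw [prabhakar_natCast_neg, fracPowerSeries, ← tsum_mul_left]
  refine tsum_congr fun k => ?_
  rw [mul_rpow hc hu.le, mul_pow, add_sub_assoc, rpow_mul_natCast_add hu,
    ← rpow_mul_natCast hc]
  ring

theorem kinetic_power_solution_general (ρ ν c : ℝ) (hρ : 0 < ρ) (hν : 0 < ν) (hc : 0 < c)
    (n : ℕ) (N₀ : ℝ)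
    (N : ℝ → ℝ) (hN : N = fun t => N₀ * Real.Gamma ρ * t ^ (ρ - 1) * prabhakar ν ρ (n : ℝ) (-(c * t) ^ ν)) :
    ∀ t : ℝ, 0 < t →
      N t - N₀ * t ^ (ρ - 1)
        = -∑ r ∈ Finset.Icc 1 n, (n.choose r : ℝ) * c ^ ((r : ℝ) * ν) * rlInt ((r : ℝ) * ν) N t := by
  intro t ht
  set a : ℕ → ℝ := fun k => N₀ * Gamma ρ * Ring.choose (-(n : ℝ)) k
  set F : ℕ → ℝ := fun r => fracPowerSeries (fun m => shiftCoeff r a m * c ^ (ν * m)) ν ρ t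
  have hseries : ∀ u, 0 < u → N u = fracPowerSeries (fun k => a k * c ^ (ν * k)) ν ρ u :=
    fun u hu => by rw [hN]; exact mul_rpow_mul_prabhakar_eq_fracPowerSeries _ ν ρ n hc.le hu
  have hbound := abs_shiftCoeff_choose_neg_mul_rpow_le hc (N₀ * Gamma ρ) ν n
  have hF : ∀ r ∈ Finset.Icc 1 n, c ^ ((r : ℝ) * ν) * rlInt ((r : ℝ) * ν) N t = F r := by
    intro r hr
    have hr0 : (0 : ℝ) < r := by exact_mod_cast (Finset.mem_Icc.1 hr).1
    rw [rlInt_congr ht.le hseries, rlInt_fracPowerSeries hν.le hρ (by positivity) ht,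
      rpow_mul_fracPowerSeries_shift hc]
    exact summable_fracPowerSeries hν (by positivity) ht fun k =>
      (abs_abs _).trans_le (by simpa [a] using hbound 0 k)
  have hsum : N t + ∑ r ∈ Finset.Icc 1 n,
      (n.choose r : ℝ) * c ^ ((r : ℝ) * ν) * rlInt ((r : ℝ) * ν) N t
      = ∑ r ∈ Finset.range (n + 1), (n.choose r : ℝ) * F r := by
    rw [Nat.range_succ_eq_Icc_zero, ← Finset.insert_Icc_add_one_left_eq_Icc (Nat.zero_le n),
      Finset.sum_insert (by simp), zero_add]
    congr 1
    · simp [F, hseries t ht]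
    · exact Finset.sum_congr rfl fun r hr => by rw [mul_assoc, hF r hr]
  rw [fracPowerSeries_sum _ _ _ fun r _ => summable_fracPowerSeries hν hρ ht (hbound r),
    funext (sum_choose_mul_shiftCoeff_choose_neg_mul_rpow _ c ν n), fracPowerSeries_ite_zero,
    mul_div_cancel_right₀ _ (Gamma_pos_of_pos hρ).ne'] at hsum
  linarith

theorem kinetic_power_solution (ρ ν c : ℝ) (hρ : 0 < ρ) (hν : 0 < ν) (hc : 0 < c)
    (n : ℕ) (hn : 0 < n) (N₀ : ℝ)
    (N : ℝ → ℝ) (hN : N = fun t => N₀ * Real.Gamma ρ * t ^ (ρ - 1) * prabhakar ν ρ (n : ℝ) (-(c * t) ^ ν)) :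
    ∀ t : ℝ, 0 < t →
      N t - N₀ * t ^ (ρ - 1)
        = -∑ r ∈ Finset.Icc 1 n, (n.choose r : ℝ) * c ^ ((r : ℝ) * ν) * rlInt ((r : ℝ) * ν) N t :=
  kinetic_power_solution_general ρ ν c hρ hν hc n N₀ N hN
end

section
/- For the classical Mittag-Leffler function E_ν with ν > 0 and c > 0, the function N(t) = N₀ E_ν(-c^ν t^ν) satisfies the Volterra integral equation N(t) - N₀ = -c^ν (₀D_t^{-ν} N)(t) for all t ≥ 0 (the case f(t) = 1 of the Hille–Tamarkin result). -/
open MeasureTheory Real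

/-- Classical Mittag-Leffler function (real argument). -/
noncomputable def mittagLeffler (ν : ℝ) (z : ℝ) : ℝ :=
  ∑' k : ℕ, z ^ k / Real.Gamma (ν * k + 1)

open Filter

/-!
Expand `E_ν(-a u^ν) = ∑ (-a)^k u^(νk) / Γ(νk + 1)` and integrate term by term against the
Riemann–Liouville kernel. The Beta integral
`₀D_t^{-ν} u^(νk) = Γ(νk + 1) / Γ(νk + ν + 1) t^(νk + ν)` turns the `k`-th term into the
`(k + 1)`-st one divided by `-a`, so `-a ₀D_t^{-ν} N` is the series of `N` without its constant
term `N₀`. Termwise integration is justified by the absolute convergence of `∑ x^k / Γ(νk + b)`,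
which follows from the ratio test and the log-convexity of `Γ`.
-/

theorem integral_rpow_mul_sub_rpow {p q t : ℝ} (hp : 0 < p) (hq : 0 < q) (ht : 0 < t) :
    ∫ u in (0:ℝ)..t, u ^ (p - 1) * (t - u) ^ (q - 1)
      = Gamma p * Gamma q / Gamma (p + q) * t ^ (p + q - 1) := by
  have hβ := Complex.betaIntegral_scaled p q ht
  rw [Complex.betaIntegral_eq_Gamma_mul_div _ _ (by simpa) (by simpa)] at hβ
  have hcast : ∀ u ∈ Set.uIcc 0 t, ((u ^ (p - 1) * (t - u) ^ (q - 1) : ℝ) : ℂ)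
      = (u : ℂ) ^ ((p : ℂ) - 1) * ((t : ℂ) - u) ^ ((q : ℂ) - 1) := by
    intro u hu
    rw [Set.uIcc_of_le ht.le] at hu
    push_cast [Complex.ofReal_cpow hu.1, Complex.ofReal_cpow (sub_nonneg.2 hu.2)]
    rfl
  apply Complex.ofReal_injective
  rw [← intervalIntegral.integral_ofReal, intervalIntegral.integral_congr hcast, hβ]
  push_cast [Complex.ofReal_cpow ht.le, ← Complex.Gamma_ofReal]
  ring

theorem Gamma_mul_rpow_le_Gamma_add {s μ : ℝ} (hμ₀ : 0 ≤ μ) (hμ₁ : μ ≤ 1) (hs : 0 < s - 1 + μ) :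
    Gamma s * (s - 1 + μ) ^ μ ≤ Gamma (s + μ) := by
  have hΓs : 0 < Gamma s := Gamma_pos_of_pos (by linarith)
  have hΓsμ : 0 < Gamma (s + μ) := Gamma_pos_of_pos (by linarith)
  have hrec : Gamma (s - 1 + μ) = Gamma (s + μ) / (s - 1 + μ) := by
    rw [eq_div_iff hs.ne', mul_comm, ← Gamma_add_one hs.ne']
    ring_nf
  have hconv := convexOn_log_Gamma.2 (Set.mem_Ioi.2 hs)
    (Set.mem_Ioi.2 (by linarith : 0 < s + μ)) hμ₀ (sub_nonneg.2 hμ₁) (add_sub_cancel μ 1)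
  simp only [smul_eq_mul, Function.comp_apply, hrec, log_div hΓsμ.ne' hs.ne'] at hconv
  rw [show μ * (s - 1 + μ) + (1 - μ) * (s + μ) = s by ring] at hconv
  rw [← exp_log hΓs, ← exp_log hΓsμ, rpow_def_of_pos hs, ← exp_add, exp_le_exp]
  linarith

theorem summable_pow_div_Gamma_mul_add {ν : ℝ} (hν : 0 < ν) (b x : ℝ) :
    Summable fun k : ℕ => x ^ k / Gamma (ν * k + b) := by
  set μ := min ν 1
  have hμ : 0 < μ := lt_min hν one_pos
  have hs : Tendsto (fun k : ℕ => ν * k + b) atTop atTop :=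
    tendsto_atTop_add_const_right _ b (tendsto_natCast_atTop_atTop.const_mul_atTop hν)
  have hgrowth : Tendsto (fun k : ℕ => (ν * k + b - 1 + μ) ^ μ) atTop atTop :=
    (tendsto_rpow_atTop hμ).comp (tendsto_atTop_add_const_right _ (μ - 1) hs |>.congr
      fun k => by ring)
  refine summable_of_ratio_norm_eventually_le (r := 1 / 2) (by norm_num) ?_
  filter_upwards [hs.eventually_ge_atTop 2, hgrowth.eventually_ge_atTop (2 * |x|)] with k hk hkx
  have hΓ : 0 < Gamma (ν * k + b) := Gamma_pos_of_pos (by linarith)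
  have hΓ' : 0 < Gamma (ν * ↑(k + 1) + b) := Gamma_pos_of_pos (by push_cast; nlinarith)
  have hratio : 2 * |x| * Gamma (ν * k + b) ≤ Gamma (ν * ↑(k + 1) + b) := calc
    2 * |x| * Gamma (ν * k + b) ≤ Gamma (ν * k + b) * (ν * k + b - 1 + μ) ^ μ := by
      rw [mul_comm]; exact mul_le_mul_of_nonneg_left hkx hΓ.le
    _ ≤ Gamma (ν * k + b + μ) :=
      Gamma_mul_rpow_le_Gamma_add hμ.le (min_le_right _ _) (by linarith)
    _ ≤ Gamma (ν * ↑(k + 1) + b) :=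
      Gamma_strictMonoOn_Ici.monotoneOn (by simp only [Set.mem_Ici]; linarith)
        (by simp only [Set.mem_Ici]; push_cast; nlinarith)
        (by push_cast; linarith [min_le_left ν 1])
  rw [norm_div, norm_div, norm_pow, norm_pow, Real.norm_of_nonneg hΓ.le,
    Real.norm_of_nonneg hΓ'.le, Real.norm_eq_abs, div_le_iff₀ hΓ', pow_succ]
  calc |x| ^ k * |x|
      = 1 / 2 * (|x| ^ k / Gamma (ν * k + b)) * (2 * |x| * Gamma (ν * k + b)) := by field_simp
    _ ≤ _ := by gcongr

theorem rlInt_tsum_mul_rpow {ν t : ℝ} (hν : 0 < ν) (ht : 0 < t) {f : ℝ → ℝ} {c p : ℕ → ℝ}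
    (hp : ∀ k, -1 < p k) (hf : ∀ u ∈ Set.Ioc 0 t, f u = ∑' k, c k * u ^ p k)
    (hsum : Summable fun k => |c k * (Gamma (p k + 1) / Gamma (p k + ν + 1) * t ^ (p k + ν))|) :
    rlInt ν f t = ∑' k, c k * (Gamma (p k + 1) / Gamma (p k + ν + 1) * t ^ (p k + ν)) := by
  have hΓν : 0 < Gamma ν := Gamma_pos_of_pos hν
  have hfactor : ∀ k, 0 < Gamma (p k + 1) / Gamma (p k + ν + 1) * t ^ (p k + ν) := fun k =>
    mul_pos (div_pos (Gamma_pos_of_pos (by linarith [hp k]))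
      (Gamma_pos_of_pos (by linarith [hp k]))) (rpow_pos_of_pos ht _)
  set F : ℕ → ℝ → ℝ := fun k u => c k * (u ^ p k * (t - u) ^ (ν - 1))
  have hbeta : ∀ k, ∫ u in Set.Ioc 0 t, u ^ p k * (t - u) ^ (ν - 1)
      = Gamma (p k + 1) * Gamma ν / Gamma (p k + ν + 1) * t ^ (p k + ν) := by
    intro k
    rw [← intervalIntegral.integral_of_le ht.le, show p k + ν + 1 = p k + 1 + ν by ring,
      show p k + ν = p k + 1 + ν - 1 by ring]
    simpa using integral_rpow_mul_sub_rpow (p := p k + 1) (by linarith [hp k]) hν ht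
  have hint : ∀ k, Integrable (F k) (volume.restrict (Set.Ioc 0 t)) := fun k =>
    (Integrable.of_integral_ne_zero (by
      rw [hbeta, mul_div_right_comm, mul_right_comm]
      exact (mul_pos (hfactor k) hΓν).ne')).const_mul (c k)
  have hnorm : ∀ k, ∫ u in Set.Ioc 0 t, ‖F k u‖
      = Gamma ν * |c k * (Gamma (p k + 1) / Gamma (p k + ν + 1) * t ^ (p k + ν))| := by
    intro k
    rw [setIntegral_congr_fun measurableSet_Ioc
      (g := fun u => |c k| * (u ^ p k * (t - u) ^ (ν - 1))) fun u hu => by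
        rw [norm_mul, Real.norm_eq_abs, Real.norm_of_nonneg (by
          have := sub_nonneg.2 hu.2; have := hu.1.le; positivity)],
      integral_const_mul, hbeta, abs_mul, abs_of_pos (hfactor k)]
    field_simp
  have hpoint : ∀ u ∈ Set.Ioc 0 t, (t - u) ^ (ν - 1) * f u = ∑' k, F k u := fun u hu => by
    rw [hf u hu, ← tsum_mul_left]
    exact tsum_congr fun k => by ring
  rw [rlInt, intervalIntegral.integral_of_le ht.le,
    setIntegral_congr_fun measurableSet_Ioc hpoint, ← integral_tsum_of_summable_integral_norm hint
      ((hsum.mul_left (Gamma ν)).congr fun k => (hnorm k).symm), ← tsum_mul_left]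
  refine tsum_congr fun k => ?_
  rw [integral_const_mul, hbeta]
  field_simp

theorem mittagLeffler_zero (ν : ℝ) : mittagLeffler ν 0 = 1 := by
  rw [mittagLeffler, tsum_eq_single 0 fun k hk => by rw [zero_pow hk, zero_div]]
  simp

theorem mittagLeffler_eq_one_add_mul {ν : ℝ} (hν : 0 < ν) (z : ℝ) :
    mittagLeffler ν z = 1 + z * ∑' k : ℕ, z ^ k / Gamma (ν * k + (ν + 1)) := by
  rw [mittagLeffler, (summable_pow_div_Gamma_mul_add hν 1 z).tsum_eq_zero_add, ← tsum_mul_left]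
  simp only [pow_zero, CharP.cast_eq_zero, mul_zero, zero_add, Gamma_one, div_one, Nat.cast_succ]
  congr 1
  exact tsum_congr fun k => by rw [pow_succ]; ring_nf

theorem hille_tamarkin_constant_source_general (ν c : ℝ) (hν : 0 < ν) (N₀ : ℝ)
    (N : ℝ → ℝ) (hN : N = fun t => N₀ * mittagLeffler ν (-(c ^ ν) * t ^ ν)) :
    ∀ t : ℝ, 0 ≤ t → N t - N₀ = -(c ^ ν) * rlInt ν N t := by
  intro t ht
  subst hN
  rcases ht.eq_or_lt with rfl | ht
  · simp [zero_rpow hν.ne', mittagLeffler_zero, rlInt]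
  set a := c ^ ν
  have hseries : ∀ u ∈ Set.Ioc 0 t, N₀ * mittagLeffler ν (-a * u ^ ν)
      = ∑' k : ℕ, N₀ * (-a) ^ k / Gamma (ν * k + 1) * u ^ (ν * k) := fun u hu => by
    rw [mittagLeffler, ← tsum_mul_left]
    exact tsum_congr fun k => by rw [mul_pow, ← rpow_mul_natCast hu.1.le]; ring
  have hterm : ∀ k : ℕ, N₀ * (-a) ^ k / Gamma (ν * k + 1)
      * (Gamma (ν * k + 1) / Gamma (ν * k + ν + 1) * t ^ (ν * k + ν))
      = N₀ * t ^ ν * ((-a * t ^ ν) ^ k / Gamma (ν * k + (ν + 1))) := fun k => by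
    have hΓ : Gamma (ν * k + 1) ≠ 0 := (Gamma_pos_of_pos (by positivity)).ne'
    rw [rpow_add ht, rpow_mul_natCast ht.le, mul_pow, ← add_assoc]
    field_simp
  rw [rlInt_tsum_mul_rpow hν ht (fun k => neg_one_lt_zero.trans_le (by positivity)) hseries
      (by simpa only [hterm] using ((summable_pow_div_Gamma_mul_add hν _ _).mul_left _).abs),
    tsum_congr hterm, tsum_mul_left]
  beta_reduce
  rw [mittagLeffler_eq_one_add_mul hν]
  ring

theorem hille_tamarkin_constant_source (ν c : ℝ) (hν : 0 < ν) (hc : 0 < c) (N₀ : ℝ)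
    (N : ℝ → ℝ) (hN : N = fun t => N₀ * mittagLeffler ν (-(c ^ ν) * t ^ ν)) :
    ∀ t : ℝ, 0 ≤ t → N t - N₀ = -(c ^ ν) * rlInt ν N t :=
  hille_tamarkin_constant_source_general ν c hν N₀ N hN
end

section
/- For n = 1 space dimension and 0 < α < 1, the series N(x,t) = (1/(2 t^{α/2})) ∑_{l=0}^∞ (-1)^l A^{l/2} / (Γ(1 - α(l+1)/2) · l!) with A = x²/t^α converges absolutely for every x ∈ ℝ and t > 0. -/
/-!
The reflection formula gives `1 / Γ(1 - z) = Γ(z) sin(π z) / π`, so the `l`-th term is at most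
`√|A| ^ l · Γ(z) / l!` with `z = α(l + 1)/2 ≤ (l + 1)/2` because `α < 1`. Once `z ≥ 2`,
monotonicity of `Γ` on `[2, ∞)` gives `Γ(z) ≤ (l - ⌊l/3⌋)!`, and `(l - ⌊l/3⌋)! ⌊l/3⌋! ≤ l!` bounds
the term by `√|A| ^ l / ⌊l/3⌋!`. This majorant is summable because `⌊l/3⌋!` eventually dominates
every geometric sequence.
-/

open Real Filter Nat

/-- Also at integer `z`, where both sides are `0` because `Gamma` vanishes at its poles. -/
theorem Real.inv_Gamma_one_sub {z : ℝ} (hz : 0 < z) :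
    (Gamma (1 - z))⁻¹ = Gamma z * sin (π * z) / π := by
  have h : Gamma (1 - z) = π / sin (π * z) / Gamma z :=
    eq_div_of_mul_eq (Gamma_pos_of_pos hz).ne' (by rw [mul_comm, Gamma_mul_Gamma_one_sub])
  rw [h, inv_div, div_div_eq_mul_div]

theorem Real.abs_inv_Gamma_one_sub_le {z : ℝ} (hz : 0 < z) :
    |(Gamma (1 - z))⁻¹| ≤ Gamma z := by
  have hΓ := Gamma_pos_of_pos hz
  rw [inv_Gamma_one_sub hz, abs_div, abs_mul, abs_of_pos hΓ, abs_of_pos pi_pos,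
    div_le_iff₀ pi_pos]
  nlinarith [abs_sin_le_one (π * z), pi_gt_three]

theorem Real.Gamma_le_factorial {z : ℝ} {n : ℕ} (h2 : 2 ≤ z) (hn : z ≤ n + 1) :
    Gamma z ≤ n ! := by
  simpa [Gamma_nat_eq_factorial] using
    Gamma_strictMonoOn_Ici.monotoneOn (Set.mem_Ici.2 h2) (Set.mem_Ici.2 (h2.trans hn)) hn

theorem Real.Gamma_mul_factorial_div_three_le {z : ℝ} {l : ℕ} (h2 : 2 ≤ z)
    (hz : z ≤ (l + 1) / 2) : Gamma z * (l / 3)! ≤ l ! := by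
  have hk : z ≤ ((l - l / 3 : ℕ) : ℝ) + 1 := by
    have : (l : ℝ) + 1 ≤ 2 * ((l - l / 3 : ℕ) : ℝ) + 2 := by
      exact_mod_cast (by omega : l + 1 ≤ 2 * (l - l / 3) + 2)
    linarith
  calc Gamma z * (l / 3)! ≤ (l - l / 3)! * (l / 3)! := by
        gcongr; exact Gamma_le_factorial h2 hk
    _ ≤ l ! := by
        rw [mul_comm]
        exact_mod_cast Nat.le_of_dvd (factorial_pos l)
          (factorial_mul_factorial_dvd_factorial (Nat.div_le_self l 3))

theorem summable_pow_div_factorial_div {c : ℝ} (hc : 0 ≤ c) {m : ℕ} (hm : 0 < m) :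
    Summable fun l : ℕ => c ^ l / ((l / m)! : ℝ) := by
  obtain ⟨b, hb, hcb⟩ : ∃ b : ℝ, 1 ≤ b ∧ c < b := ⟨c + 1, by linarith, by linarith⟩
  have hb0 : 0 < b := by linarith
  obtain ⟨N, hN⟩ := eventually_atTop.1 <|
    (FloorSemiring.tendsto_pow_div_factorial_atTop (b ^ m)).eventually (eventually_le_nhds one_pos)
  refine ((summable_geometric_of_lt_one (div_nonneg hc hb0.le) ((div_lt_one hb0).2 hcb)).mul_left
    (b ^ m)).of_norm_bounded_eventually_nat ?_
  filter_upwards [eventually_ge_atTop (N * m)] with l hl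
  have hbq : 0 < (b ^ m) ^ (l / m) := by positivity
  have hfac : (b ^ m) ^ (l / m) ≤ ((l / m)! : ℝ) := by
    have := hN _ ((Nat.le_div_iff_mul_le hm).2 hl)
    rwa [div_le_one (by positivity)] at this
  have hpow : b ^ l ≤ (b ^ m) ^ (l / m) * b ^ m := by
    rw [← pow_mul, ← pow_add]
    exact pow_le_pow_right₀ hb (by have := Nat.lt_mul_div_succ l hm; rw [mul_add] at this; omega)
  rw [Real.norm_of_nonneg (by positivity)]
  calc c ^ l / ((l / m)! : ℝ) ≤ c ^ l / (b ^ m) ^ (l / m) := by gcongr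
    _ ≤ b ^ m * (c / b) ^ l := by
        rw [div_pow, ← mul_div_assoc, div_le_div_iff₀ hbq (by positivity)]
        calc c ^ l * b ^ l ≤ c ^ l * ((b ^ m) ^ (l / m) * b ^ m) := by gcongr
          _ = b ^ m * c ^ l * (b ^ m) ^ (l / m) := by ring

theorem Real.abs_rpow_natCast_div_two_le (A : ℝ) (l : ℕ) : |A ^ ((l : ℝ) / 2)| ≤ √|A| ^ l :=
  calc |A ^ ((l : ℝ) / 2)| ≤ |A| ^ ((l : ℝ) / 2) := abs_rpow_le_abs_rpow _ _
    _ = √|A| ^ l := by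
        rw [sqrt_eq_rpow, ← rpow_natCast, ← rpow_mul (abs_nonneg A)]
        ring_nf

theorem diffusion_series_abs_convergent_general (α : ℝ) (hα : 0 < α) (hα1 : α < 1)
    (x t : ℝ) :
    Summable (fun l : ℕ =>
      |(-1 : ℝ) ^ l * (x ^ 2 / t ^ α) ^ ((l : ℝ) / 2) /
        (Real.Gamma (1 - α * (l + 1) / 2) * (l.factorial : ℝ))|) := by
  set A := x ^ 2 / t ^ α
  refine (summable_pow_div_factorial_div (sqrt_nonneg |A|) three_pos).of_norm_bounded_eventually_nat
    ?_
  filter_upwards [eventually_ge_atTop ⌈4 / α⌉₊] with l hl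
  set z := α * (l + 1) / 2 with hz_def
  have hz2 : 2 ≤ z := by
    have : 4 ≤ (l : ℝ) * α := (div_le_iff₀ hα).1 (ceil_le.1 hl)
    rw [hz_def]; linarith
  have hz : z ≤ (l + 1) / 2 := by
    have : α * (l + 1) ≤ l + 1 := mul_le_of_le_one_left (by positivity) hα1.le
    rw [hz_def]; linarith
  rw [Real.norm_eq_abs, abs_abs]
  calc |(-1 : ℝ) ^ l * A ^ ((l : ℝ) / 2) / (Gamma (1 - z) * l !)|
      = |A ^ ((l : ℝ) / 2)| * |(Gamma (1 - z))⁻¹| / l ! := by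
        rw [abs_div, abs_mul, abs_mul, abs_pow, abs_neg, abs_one, one_pow, one_mul, abs_inv,
          Nat.abs_cast]
        ring
    _ ≤ √|A| ^ l * Gamma z / l ! := by
        gcongr
        exacts [abs_rpow_natCast_div_two_le A l, abs_inv_Gamma_one_sub_le (by linarith)]
    _ ≤ √|A| ^ l / (l / 3)! := by
        rw [div_le_div_iff₀ (by positivity) (by positivity), mul_assoc]
        gcongr
        exact Gamma_mul_factorial_div_three_le hz2 hz

theorem diffusion_series_abs_convergent (α : ℝ) (hα : 0 < α) (hα1 : α < 1)
    (x t : ℝ) (ht : 0 < t) :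
    Summable (fun l : ℕ =>
      |(-1 : ℝ) ^ l * (x ^ 2 / t ^ α) ^ ((l : ℝ) / 2) /
        (Real.Gamma (1 - α * (l + 1) / 2) * (l.factorial : ℝ))|) :=
  diffusion_series_abs_convergent_general α hα hα1 x t
end
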